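/- Let γ ≠ 0 and κ(x) = tanh(x/√2). Suppose v : ℝ → ℝ is in L²(ℝ), continuous, twice differentiable away from 0, satisfies -v'' + 2v - 3(1-κ²)v = 0 on ℝ \ {0}, and the jump condition v'(0⁺) - v'(0⁻) = γ v(0). Then v ≡ 0. -/

import Mathlib

/-!
On each half-line the Wronskian of `v` with the zero mode `w = sech²(x/√2)`, which solves the
same equation, is constant; since `w 0 = 1` and `w' 0 = 0` it equals the one-sided derivative
`v'(0±)`. If this value `D` were nonzero, reduction of order `(v/w)' = D/w²` would force
`√2 D v ≥ D² κ - √2 D v(0) w`, so `v` would stay away from `0` at infinity, which is impossible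
for `v ∈ L²`. Hence `v'(0±) = 0`, the jump condition gives `v 0 = 0`, and `v = v 0 * w = 0`
on both half-lines.
-/

open MeasureTheory Filter Topology Real Set
open scoped NNReal ENNReal

lemma Real.hasDerivAt_tanh (x : ℝ) : HasDerivAt tanh (1 - tanh x ^ 2) x := by
  have h := (hasDerivAt_sinh x).div (hasDerivAt_cosh x) (cosh_pos x).ne'
  rw [show sinh / cosh = tanh from funext fun y => (tanh_eq_sinh_div_cosh y).symm] at h
  refine h.congr_deriv ?_
  rw [tanh_eq_sinh_div_cosh]
  field_simp

lemma Real.tendsto_tanh_atTop : Tendsto tanh atTop (𝓝 1) := by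
  have he : Tendsto (fun x => rexp (-(2 * x))) atTop (𝓝 0) :=
    tendsto_exp_neg_atTop_nhds_zero.comp (tendsto_id.const_mul_atTop two_pos)
  have h : Tendsto (fun x => (1 - rexp (-(2 * x))) / (1 + rexp (-(2 * x)))) atTop (𝓝 1) := by
    have := (he.const_sub 1).div (he.const_add 1) (by norm_num)
    norm_num at this
    exact this
  refine h.congr fun x => ?_
  have h2 : rexp x * rexp (-x) = 1 := by rw [← exp_add]; simp
  rw [tanh_eq, show -(2 * x) = -x + -x by ring, exp_add,
    div_eq_div_iff (by positivity) (by positivity)]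
  linear_combination (-2 * rexp (-x)) * h2

lemma MeasureTheory.MemLp.le_zero_of_eventually_ge {f : ℝ → ℝ} {p : ℝ≥0∞} {c : ℝ}
    (hf : MemLp f p volume) (hp_ne_zero : p ≠ 0) (hp_ne_top : p ≠ ∞)
    (h : ∀ᶠ x in atTop, c ≤ f x) : c ≤ 0 := by
  by_contra! hc
  obtain ⟨M, hM⟩ := eventually_atTop.mp h
  have hsub : Ici M ⊆ {x | c.toNNReal ≤ ‖f x‖₊} := fun x hx => by
    rw [mem_ofPred_eq, ← NNReal.coe_le_coe, coe_nnnorm, Real.coe_toNNReal _ hc.le, norm_eq_abs]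
    exact (hM x hx).trans (le_abs_self _)
  have := (measure_mono hsub).trans_lt (hf.meas_ge_lt_top hp_ne_zero hp_ne_top (by simpa using hc))
  simp at this

lemma ge_of_tendsto_nhdsGT_of_hasDerivAt_nonneg {f f' : ℝ → ℝ} {a L : ℝ}
    (hf : ∀ x > a, HasDerivAt f (f' x) x) (hf' : ∀ x > a, 0 ≤ f' x)
    (hL : Tendsto f (𝓝[>] a) (𝓝 L)) : ∀ x > a, L ≤ f x := by
  have hmono : MonotoneOn f (Ioi a) := by
    refine monotoneOn_of_hasDerivWithinAt_nonneg (f' := f') (convex_Ioi a)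
      (fun x hx => (hf x hx).continuousAt.continuousWithinAt) (fun x hx => ?_) (fun x hx => ?_)
    · rw [interior_Ioi] at hx ⊢
      exact (hf x hx).hasDerivWithinAt
    · rw [interior_Ioi] at hx
      exact hf' x hx
  intro x hx
  refine le_of_tendsto hL ?_
  filter_upwards [Ioc_mem_nhdsGT hx] with y hy
  exact hmono hy.1 hx hy.2

lemma eq_of_tendsto_nhdsGT_of_hasDerivAt_zero {f : ℝ → ℝ} {a L : ℝ}
    (hf : ∀ x > a, HasDerivAt f 0 x) (hL : Tendsto f (𝓝[>] a) (𝓝 L)) :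
    ∀ x > a, f x = L := by
  intro x hx
  refine le_antisymm ?_ (ge_of_tendsto_nhdsGT_of_hasDerivAt_nonneg hf (fun _ _ => le_rfl) hL x hx)
  simpa using ge_of_tendsto_nhdsGT_of_hasDerivAt_nonneg (fun y hy => (hf y hy).neg)
    (fun _ _ => by simp) hL.neg x hx

lemma hasDerivAt_wronskian {q u u' v v' : ℝ → ℝ} {x : ℝ}
    (hu : HasDerivAt u (u' x) x) (hu' : HasDerivAt u' (q x * u x) x)
    (hv : HasDerivAt v (v' x) x) (hv' : HasDerivAt v' (q x * v x) x) :
    HasDerivAt (fun x => u' x * v x - u x * v' x) 0 x :=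
  ((hu'.mul hv).sub (hu.mul hv')).congr_deriv (by ring)

namespace Kink

noncomputable def κ (x : ℝ) : ℝ := tanh (x / √2)

/-- `w = √2 κ'` is the translation zero mode of the kink, normalised by `w 0 = 1`. -/
noncomputable def w (x : ℝ) : ℝ := 1 - κ x ^ 2

noncomputable def w' (x : ℝ) : ℝ := -√2 * κ x * w x

lemma w_pos (x : ℝ) : 0 < w x := sub_pos.mpr (tanh_sq_lt_one _)

lemma w_le_one (x : ℝ) : w x ≤ 1 := sub_le_self _ (sq_nonneg _)

lemma w_neg (x : ℝ) : w (-x) = w x := by simp [w, κ, neg_div, tanh_neg]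

lemma κ_sq (x : ℝ) : κ x ^ 2 = 1 - w x := by rw [w]; ring

lemma hasDerivAt_κ (x : ℝ) : HasDerivAt κ (w x / √2) x :=
  ((hasDerivAt_tanh (x / √2)).comp x ((hasDerivAt_id x).div_const √2)).congr_deriv
    (by simp [w, κ, div_eq_mul_inv])

lemma hasDerivAt_w (x : ℝ) : HasDerivAt w (w' x) x := by
  have h : HasDerivAt (fun x => 1 - κ x ^ 2) _ x := ((hasDerivAt_κ x).pow 2).const_sub 1
  refine h.congr_deriv ?_
  rw [w']
  field_simp
  rw [sq_sqrt zero_le_two]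
  ring

lemma hasDerivAt_w' (x : ℝ) : HasDerivAt w' ((2 - 3 * w x) * w x) x := by
  refine (((hasDerivAt_κ x).const_mul (-√2)).mul (hasDerivAt_w x)).congr_deriv ?_
  rw [w']
  field_simp
  rw [sq_sqrt zero_le_two, κ_sq]
  ring

lemma hasDerivAt_κ_div_w (x : ℝ) :
    HasDerivAt (fun x => κ x / w x) (√2 / w x - 1 / √2) x := by
  refine ((hasDerivAt_κ x).div (hasDerivAt_w x) (w_pos x).ne').congr_deriv ?_
  have := (w_pos x).ne'
  rw [w']
  field_simp
  rw [sq_sqrt zero_le_two, κ_sq]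
  ring

lemma tendsto_κ_nhdsGT_zero : Tendsto κ (𝓝[>] 0) (𝓝 0) := by
  simpa [κ] using (hasDerivAt_κ 0).continuousAt.tendsto.mono_left nhdsWithin_le_nhds

lemma tendsto_w_nhdsGT_zero : Tendsto w (𝓝[>] 0) (𝓝 1) := by
  simpa [w, κ] using (hasDerivAt_w 0).continuousAt.tendsto.mono_left nhdsWithin_le_nhds

lemma tendsto_w'_nhdsGT_zero : Tendsto w' (𝓝[>] 0) (𝓝 0) := by
  simpa [w', κ] using (hasDerivAt_w' 0).continuousAt.tendsto.mono_left nhdsWithin_le_nhds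

lemma tendsto_κ_atTop : Tendsto κ atTop (𝓝 1) :=
  tendsto_tanh_atTop.comp (tendsto_id.atTop_div_const (sqrt_pos.mpr two_pos))

lemma tendsto_w_atTop : Tendsto w atTop (𝓝 0) := by
  have := (tendsto_κ_atTop.pow 2).const_sub 1
  norm_num at this
  exact this

section HalfLine

variable {v v' : ℝ → ℝ} {a D : ℝ}

lemma wronskian_eq (hv : ∀ x > 0, HasDerivAt v (v' x) x)
    (hv' : ∀ x > 0, HasDerivAt v' ((2 - 3 * w x) * v x) x)
    (ha : Tendsto v (𝓝[>] 0) (𝓝 a)) (hD : Tendsto v' (𝓝[>] 0) (𝓝 D)) :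
    ∀ x > 0, v' x * w x - v x * w' x = D := by
  refine eq_of_tendsto_nhdsGT_of_hasDerivAt_zero (fun x hx => hasDerivAt_wronskian
    (q := fun x => 2 - 3 * w x) (hv x hx) (hv' x hx) (hasDerivAt_w x) (hasDerivAt_w' x)) ?_
  simpa using (hD.mul tendsto_w_nhdsGT_zero).sub (ha.mul tendsto_w'_nhdsGT_zero)

lemma hasDerivAt_div_w {x : ℝ} (hv : HasDerivAt v (v' x) x)
    (hW : v' x * w x - v x * w' x = D) :
    HasDerivAt (fun x => v x / w x) (D / w x ^ 2) x := by
  have h := hv.div (hasDerivAt_w x) (w_pos x).ne'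
  rwa [hW] at h

/-- Comparison of `v / w` with `κ / w = sinh · cosh (· / √2)`, whose derivative
`√2 / w - 1 / √2` is at most `√2 / w²`. -/
lemma sq_mul_κ_le (hv : ∀ x > 0, HasDerivAt v (v' x) x)
    (hv' : ∀ x > 0, HasDerivAt v' ((2 - 3 * w x) * v x) x)
    (ha : Tendsto v (𝓝[>] 0) (𝓝 a)) (hD : Tendsto v' (𝓝[>] 0) (𝓝 D)) :
    ∀ x > 0, D ^ 2 * κ x ≤ √2 * D * (v x - a * w x) := by
  have hW := wronskian_eq hv hv' ha hD
  have hF : ∀ x > 0, HasDerivAt (fun x => √2 * D * (v x / w x - a) - D ^ 2 * (κ x / w x))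
      (√2 * D * (D / w x ^ 2) - D ^ 2 * (√2 / w x - 1 / √2)) x := fun x hx =>
    (((hasDerivAt_div_w (hv x hx) (hW x hx)).sub_const a).const_mul _).sub
      ((hasDerivAt_κ_div_w x).const_mul _)
  have hF' : ∀ x > 0, 0 ≤ √2 * D * (D / w x ^ 2) - D ^ 2 * (√2 / w x - 1 / √2) := by
    intro x _
    have hw := w_pos x
    have h1 : 1 / w x ≤ 1 / w x ^ 2 :=
      one_div_le_one_div_of_le (by positivity) (by nlinarith [w_le_one x])
    have h2 : 0 ≤ √2 * (1 / w x ^ 2 - 1 / w x) := mul_nonneg (sqrt_nonneg 2) (by linarith)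
    calc (0 : ℝ) ≤ D ^ 2 * (√2 * (1 / w x ^ 2 - 1 / w x) + 1 / √2) := by positivity
      _ = _ := by ring
  have hF0 : Tendsto (fun x => √2 * D * (v x / w x - a) - D ^ 2 * (κ x / w x))
      (𝓝[>] 0) (𝓝 0) := by
    simpa using (((ha.div tendsto_w_nhdsGT_zero one_ne_zero).sub_const a).const_mul (√2 * D)).sub
      ((tendsto_κ_nhdsGT_zero.div tendsto_w_nhdsGT_zero one_ne_zero).const_mul (D ^ 2))
  intro x hx
  have hw := (w_pos x).ne'
  have := mul_nonneg (ge_of_tendsto_nhdsGT_of_hasDerivAt_nonneg hF hF' hF0 x hx) (w_pos x).le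
  field_simp at this
  linarith

lemma wronskian_eq_zero_of_memLp (hv2 : MemLp v 2 volume)
    (hv : ∀ x > 0, HasDerivAt v (v' x) x)
    (hv' : ∀ x > 0, HasDerivAt v' ((2 - 3 * w x) * v x) x)
    (ha : Tendsto v (𝓝[>] 0) (𝓝 a)) (hD : Tendsto v' (𝓝[>] 0) (𝓝 D)) : D = 0 := by
  by_contra hD0
  have hlim : Tendsto (fun x => D ^ 2 * κ x + √2 * D * a * w x) atTop (𝓝 (D ^ 2)) := by
    simpa using (tendsto_κ_atTop.const_mul (D ^ 2)).add (tendsto_w_atTop.const_mul (√2 * D * a))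
  have hbound : ∀ᶠ x in atTop, D ^ 2 / 2 ≤ √2 * D * v x := by
    filter_upwards [hlim.eventually_const_le (half_lt_self (by positivity)),
      eventually_gt_atTop 0] with x hlow hx
    linarith [sq_mul_κ_le hv hv' ha hD x hx]
  have := (hv2.const_mul (√2 * D)).le_zero_of_eventually_ge two_ne_zero ENNReal.ofNat_ne_top
    hbound
  have : 0 < D ^ 2 / 2 := by positivity
  linarith

theorem eq_mul_w_of_memLp (hv2 : MemLp v 2 volume)
    (hv : ∀ x > 0, HasDerivAt v (v' x) x)
    (hv' : ∀ x > 0, HasDerivAt v' ((2 - 3 * w x) * v x) x)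
    (ha : Tendsto v (𝓝[>] 0) (𝓝 a)) (hD : Tendsto v' (𝓝[>] 0) (𝓝 D)) :
    D = 0 ∧ ∀ x > 0, v x = a * w x := by
  have hW := wronskian_eq hv hv' ha hD
  obtain rfl := wronskian_eq_zero_of_memLp hv2 hv hv' ha hD
  have hu : Tendsto (fun x => v x / w x) (𝓝[>] 0) (𝓝 a) := by
    have h := ha.div tendsto_w_nhdsGT_zero one_ne_zero
    rwa [div_one] at h
  refine ⟨rfl, fun x hx => ?_⟩
  have := eq_of_tendsto_nhdsGT_of_hasDerivAt_zero
    (fun x hx => by simpa using hasDerivAt_div_w (hv x hx) (hW x hx)) hu x hx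
  rwa [div_eq_iff (w_pos x).ne'] at this

theorem eq_mul_w_of_memLp_of_neg (hv2 : MemLp v 2 volume)
    (hv : ∀ x < 0, HasDerivAt v (v' x) x)
    (hv' : ∀ x < 0, HasDerivAt v' ((2 - 3 * w x) * v x) x)
    (ha : Tendsto v (𝓝[<] 0) (𝓝 a)) (hD : Tendsto v' (𝓝[<] 0) (𝓝 D)) :
    D = 0 ∧ ∀ x < 0, v x = a * w x := by
  have hneg : Tendsto (fun x : ℝ => -x) (𝓝[>] 0) (𝓝[<] 0) := by
    simpa using (continuous_neg.continuousWithinAt (s := Ioi (0 : ℝ)) (x := 0)).tendsto_nhdsWithin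
      fun x (hx : 0 < x) => neg_lt_zero.mpr hx
  obtain ⟨hD0, hvw⟩ := eq_mul_w_of_memLp (v := fun x => v (-x)) (v' := fun x => -v' (-x))
    (hv2.comp_measurePreserving (Measure.measurePreserving_neg volume))
    (fun x hx => ((hv (-x) (neg_lt_zero.mpr hx)).comp x (hasDerivAt_neg x)).congr_deriv
      (by ring))
    (fun x hx => ((hv' (-x) (neg_lt_zero.mpr hx)).comp x (hasDerivAt_neg x)).neg.congr_deriv
      (by rw [w_neg]; ring))
    (ha.comp hneg) (hD.comp hneg).neg
  refine ⟨neg_eq_zero.mp hD0, fun x hx => ?_⟩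
  simpa [w_neg] using hvw (-x) (neg_pos.mpr hx)

end HalfLine

end Kink

open Kink

/-- Triviality of the kernel of `L₊^γ`: a continuous `L²` function solving
`-v'' + 2v - 3(1-κ²)v = 0` away from `0` (with `κ = tanh(·/√2)`) and satisfying
the jump condition `v'(0⁺) - v'(0⁻) = γ v(0)` vanishes identically. -/
theorem kernel_Lplus_trivial (γ : ℝ) (hγ : γ ≠ 0) (v : ℝ → ℝ)
    (hv2 : MemLp v 2 (volume : Measure ℝ))
    (hcont : Continuous v)
    (hdiff : ∀ x : ℝ, x ≠ 0 → DifferentiableAt ℝ v x ∧ DifferentiableAt ℝ (deriv v) x)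
    (hode : ∀ x : ℝ, x ≠ 0 →
      -(deriv (deriv v) x) + 2 * v x
        - 3 * (1 - Real.tanh (x / Real.sqrt 2) ^ 2) * v x = 0)
    (dp dm : ℝ)
    (hdp : Tendsto (deriv v) (𝓝[>] (0:ℝ)) (𝓝 dp))
    (hdm : Tendsto (deriv v) (𝓝[<] (0:ℝ)) (𝓝 dm))
    (hjump : dp - dm = γ * v 0) :
    ∀ x : ℝ, v x = 0 := by
  have hv : ∀ x ≠ 0, HasDerivAt v (deriv v x) x := fun x hx => (hdiff x hx).1.hasDerivAt
  have hv' : ∀ x ≠ 0, HasDerivAt (deriv v) ((2 - 3 * w x) * v x) x := fun x hx =>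
    (hdiff x hx).2.hasDerivAt.congr_deriv (by rw [w, κ]; linarith [hode x hx])
  have hv_at0 : Tendsto v (𝓝 0) (𝓝 (v 0)) := hcont.continuousAt
  obtain ⟨rfl, hright⟩ := eq_mul_w_of_memLp hv2 (fun x hx => hv x hx.ne')
    (fun x hx => hv' x hx.ne') (hv_at0.mono_left nhdsWithin_le_nhds) hdp
  obtain ⟨rfl, hleft⟩ := eq_mul_w_of_memLp_of_neg hv2 (fun x hx => hv x hx.ne)
    (fun x hx => hv' x hx.ne) (hv_at0.mono_left nhdsWithin_le_nhds) hdm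
  have hγv : γ * v 0 = 0 := by rw [← hjump, sub_zero]
  have hv0 : v 0 = 0 := (mul_eq_zero.mp hγv).resolve_left hγ
  intro x
  rcases lt_trichotomy x 0 with hx | rfl | hx
  · simpa [hv0] using hleft x hx
  · exact hv0
  · simpa [hv0] using hright x hx
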